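/- Let S be a semicontent R-algebra and let W be a multiplicatively closed subset of R. Then the localization S_W of S at (the image of) W is a semicontent algebra over the localization R_W. -/

import Mathlib

/-- The Ohm-Rush content of an element `f` of the `R`-algebra `S`:
the intersection of all ideals `I` of `R` such that `f ∈ IS`. -/
def orc (R S : Type*) [CommRing R] [CommRing S] [Algebra R S] (f : S) : Ideal R :=
  sInf {I : Ideal R | f ∈ I.map (algebraMap R S)}

/-- `S` is an Ohm-Rush `R`-algebra if `f ∈ orc(f)·S` for every `f ∈ S`. -/
def IsOhmRushAlgebra (R S : Type*) [CommRing R] [CommRing S] [Algebra R S] : Prop :=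
  ∀ f : S, f ∈ (orc R S f).map (algebraMap R S)

/-- `S` is a content `R`-algebra if it is a faithfully flat Ohm-Rush `R`-algebra
satisfying the Dedekind–Mertens condition. -/
def IsContentAlgebra (R S : Type*) [CommRing R] [CommRing S] [Algebra R S] : Prop :=
  Module.FaithfullyFlat R S ∧ IsOhmRushAlgebra R S ∧
    ∀ f g : S, ∃ n : ℕ, 1 ≤ n ∧
      orc R S f ^ n * orc R S g = orc R S f ^ (n - 1) * orc R S (f * g)

/-- `S` is a semicontent `R`-algebra if it is a faithfully flat Ohm-Rush `R`-algebra and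
for every multiplicatively closed subset `W ⊆ R` and all `f, g ∈ S` with `orc(f)·R_W = R_W`,
one has `orc(fg)·R_W = orc(g)·R_W`. -/
def IsSemicontentAlgebra (R S : Type*) [CommRing R] [CommRing S] [Algebra R S] : Prop :=
  Module.FaithfullyFlat R S ∧ IsOhmRushAlgebra R S ∧
    ∀ (W : Submonoid R) (f g : S),
      (orc R S f).map (algebraMap R (Localization W)) = ⊤ →
      (orc R S (f * g)).map (algebraMap R (Localization W)) =
        (orc R S g).map (algebraMap R (Localization W))

/-- `S` is a weak content `R`-algebra if it is an Ohm-Rush `R`-algebra and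
`orc(f)·orc(g) ⊆ √(orc(fg))` for all `f, g ∈ S`. -/
def IsWeakContentAlgebra (R S : Type*) [CommRing R] [CommRing S] [Algebra R S] : Prop :=
  IsOhmRushAlgebra R S ∧
    ∀ f g : S, orc R S f * orc R S g ≤ (orc R S (f * g)).radical

/-- `S` is a Gaussian `R`-algebra if it is an Ohm-Rush `R`-algebra and
`orc(fg) = orc(f)·orc(g)` for all `f, g ∈ S`. -/
def IsGaussianAlgebra (R S : Type*) [CommRing R] [CommRing S] [Algebra R S] : Prop :=
  IsOhmRushAlgebra R S ∧ ∀ f g : S, orc R S (f * g) = orc R S f * orc R S g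

/-!
Every element of `S_W` is a unit times the image `f/1` of some `f ∈ S`, so everything reduces to
the identity `orc_{R_W}(f/1) = orc(f)·R_W`. Here `⊆` is the Ohm-Rush property of `S`. Conversely,
if `f/1 ∈ J·S_W`, then `w f ∈ I S` for some `w ∈ W`, where `I` is the contraction of `J`.
Faithful flatness gives `w ∈ orc(w)`, so `orc(w)·R_W = R_W`, and the semicontent axiom yields
`orc(f)·R_W = orc(wf)·R_W ⊆ I·R_W = J`. With contents computed this way, the Ohm-Rush property
and the semicontent condition descend from `S`, the latter because a localization of `R_W` is a
localization of `R`. Faithful flatness survives the base change `S_W ≅ R_W ⊗_R S`.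
-/

open Module

section OhmRushContent

variable {R S : Type*} [CommRing R] [CommRing S] [Algebra R S]

lemma orc_le_of_mem_map {f : S} {I : Ideal R} (h : f ∈ I.map (algebraMap R S)) :
    orc R S f ≤ I :=
  sInf_le h

lemma orc_mul_left_of_isUnit {c : S} (hc : IsUnit c) (f : S) : orc R S (c * f) = orc R S f := by
  simp only [orc, Ideal.unit_mul_mem_iff_mem _ hc]

lemma mem_orc_algebraMap [FaithfullyFlat R S] (r : R) : r ∈ orc R S (algebraMap R S r) :=
  Submodule.mem_sInf.mpr fun I hI ↦ by
    rw [← Ideal.comap_map_eq_self_of_faithfullyFlat (B := S) I]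
    exact hI

lemma Ideal.map_algebraMap_eq_of_isLocalization (U : Submonoid R) {A B : Type*} [CommRing A]
    [CommRing B] [Algebra R A] [Algebra R B] [IsLocalization U A] [IsLocalization U B]
    {I J : Ideal R} (h : I.map (algebraMap R A) = J.map (algebraMap R A)) :
    I.map (algebraMap R B) = J.map (algebraMap R B) := by
  let e : A →ₐ[R] B := IsLocalization.algEquiv U A B
  have hmap (K : Ideal R) :
      K.map (algebraMap R B) = (K.map (algebraMap R A)).map (e : A →+* B) := by
    rw [Ideal.map_map, e.comp_algebraMap]
  rw [hmap, hmap, h]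

lemma IsSemicontentAlgebra.map_orc_mul_eq (h : IsSemicontentAlgebra R S) (U : Submonoid R)
    (A : Type*) [CommRing A] [Algebra R A] [IsLocalization U A] {f : S} (g : S)
    (hf : (orc R S f).map (algebraMap R A) = ⊤) :
    (orc R S (f * g)).map (algebraMap R A) = (orc R S g).map (algebraMap R A) := by
  have hf' : (orc R S f).map (algebraMap R (Localization U)) = ⊤ := by
    rw [← Ideal.map_top (algebraMap R A)] at hf
    rw [Ideal.map_algebraMap_eq_of_isLocalization U hf, Ideal.map_top]
  exact Ideal.map_algebraMap_eq_of_isLocalization U (h.2.2 U f g hf')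

end OhmRushContent

lemma IsLocalization.exists_isUnit_mul_eq_algebraMap {S SW : Type*} [CommRing S] [CommRing SW]
    [Algebra S SW] (M : Submonoid S) [IsLocalization M SW] (x : SW) :
    ∃ u : SW, IsUnit u ∧ ∃ f : S, u * x = algebraMap S SW f :=
  let ⟨⟨f, m⟩, hx⟩ := IsLocalization.surj M x
  ⟨_, IsLocalization.map_units SW m, f, by rw [mul_comm, hx]⟩

lemma algebraMap_mem_map_map_orc {R S RW SW : Type*} [CommRing R] [CommRing S] [Algebra R S]
    [CommRing RW] [CommRing SW] [Algebra R RW] [Algebra S SW] [Algebra R SW] [IsScalarTower R S SW]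
    [Algebra RW SW] [IsScalarTower R RW SW] (hS : IsOhmRushAlgebra R S) (f : S) :
    algebraMap S SW f ∈ ((orc R S f).map (algebraMap R RW)).map (algebraMap RW SW) := by
  rw [Ideal.map_map, ← IsScalarTower.algebraMap_eq, IsScalarTower.algebraMap_eq R S SW,
    ← Ideal.map_map]
  exact Ideal.mem_map_of_mem _ (hS f)

section Localization

variable {R S : Type*} [CommRing R] [CommRing S] [Algebra R S] (W : Submonoid R)
  {RW SW : Type*} [CommRing RW] [CommRing SW] [Algebra R RW] [IsLocalization W RW]
  [Algebra S SW] [IsLocalization (W.map (algebraMap R S)) SW]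
  [Algebra R SW] [IsScalarTower R S SW] [Algebra RW SW] [IsScalarTower R RW SW]

include W

variable (RW SW) in
lemma faithfullyFlat_localization [FaithfullyFlat R S] : FaithfullyFlat RW SW := by
  have : IsLocalization (Algebra.algebraMapSubmonoid S W) SW := ‹_›
  have : Algebra.IsPushout R RW S SW := (Algebra.isPushout_of_isLocalization W RW S SW).symm
  exact .of_linearEquiv _ _ (Algebra.IsPushout.equiv R RW S SW).toLinearEquiv.symm

lemma exists_algebraMap_mul_mem_map_under {f : S} {J : Ideal RW}
    (hf : algebraMap S SW f ∈ J.map (algebraMap RW SW)) :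
    ∃ w ∈ W, algebraMap R S w * f ∈ (J.under R).map (algebraMap R S) := by
  rw [← IsLocalization.map_under W RW J, Ideal.map_map, ← IsScalarTower.algebraMap_eq,
    IsScalarTower.algebraMap_eq R S SW, ← Ideal.map_map,
    IsLocalization.algebraMap_mem_map_algebraMap_iff (W.map (algebraMap R S))] at hf
  obtain ⟨_, ⟨w, hw, rfl⟩, hwf⟩ := hf
  exact ⟨w, hw, hwf⟩

variable (RW SW) in
lemma IsSemicontentAlgebra.orc_algebraMap_localization (h : IsSemicontentAlgebra R S) (f : S) :
    orc RW SW (algebraMap S SW f) = (orc R S f).map (algebraMap R RW) := by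
  have := h.1
  refine le_antisymm (orc_le_of_mem_map (algebraMap_mem_map_map_orc h.2.1 f))
    (le_sInf fun J hJ ↦ ?_)
  obtain ⟨w, hw, hwf⟩ := exists_algebraMap_mul_mem_map_under W hJ
  have hw_top : (orc R S (algebraMap R S w)).map (algebraMap R RW) = ⊤ :=
    Ideal.eq_top_of_isUnit_mem _ (Ideal.mem_map_of_mem _ (mem_orc_algebraMap w))
      (IsLocalization.map_units RW ⟨w, hw⟩)
  calc (orc R S f).map (algebraMap R RW)
      = (orc R S (algebraMap R S w * f)).map (algebraMap R RW) :=
        (h.map_orc_mul_eq W RW f hw_top).symm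
    _ ≤ (J.under R).map (algebraMap R RW) := Ideal.map_mono (orc_le_of_mem_map hwf)
    _ = J := IsLocalization.map_under W RW J

lemma IsSemicontentAlgebra.orc_localization_eq_map (h : IsSemicontentAlgebra R S) {u x : SW}
    (hu : IsUnit u) {f : S} (hx : u * x = algebraMap S SW f) :
    orc RW SW x = (orc R S f).map (algebraMap R RW) := by
  rw [← orc_mul_left_of_isUnit hu, hx, h.orc_algebraMap_localization W RW SW]

variable (RW SW) in
lemma IsSemicontentAlgebra.isOhmRushAlgebra_localization (h : IsSemicontentAlgebra R S) :
    IsOhmRushAlgebra RW SW := by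
  intro x
  obtain ⟨u, hu, f, hx⟩ :=
    IsLocalization.exists_isUnit_mul_eq_algebraMap (W.map (algebraMap R S)) x
  rw [h.orc_localization_eq_map W hu hx, ← Ideal.unit_mul_mem_iff_mem _ hu, hx]
  exact algebraMap_mem_map_map_orc h.2.1 f

lemma IsSemicontentAlgebra.map_orc_mul_localization_eq (h : IsSemicontentAlgebra R S)
    (V : Submonoid RW) {x : SW} (y : SW)
    (hx : (orc RW SW x).map (algebraMap RW (Localization V)) = ⊤) :
    (orc RW SW (x * y)).map (algebraMap RW (Localization V)) =
      (orc RW SW y).map (algebraMap RW (Localization V)) := by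
  obtain ⟨u, hu, f, hf⟩ :=
    IsLocalization.exists_isUnit_mul_eq_algebraMap (W.map (algebraMap R S)) x
  obtain ⟨v, hv, g, hg⟩ :=
    IsLocalization.exists_isUnit_mul_eq_algebraMap (W.map (algebraMap R S)) y
  have hfg : u * v * (x * y) = algebraMap S SW (f * g) := by
    rw [map_mul, ← hf, ← hg]
    ring
  let U := IsLocalization.localizationLocalizationSubmodule W V
  have : IsLocalization U (Localization V) :=
    IsLocalization.localization_localization_isLocalization W V _
  rw [h.orc_localization_eq_map W hu hf, Ideal.map_map, ← IsScalarTower.algebraMap_eq] at hx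
  rw [h.orc_localization_eq_map W (hu.mul hv) hfg, h.orc_localization_eq_map W hv hg,
    Ideal.map_map, Ideal.map_map, ← IsScalarTower.algebraMap_eq]
  exact h.map_orc_mul_eq U (Localization V) g hx

end Localization

/-- Localization of a semicontent algebra: if `S` is a semicontent `R`-algebra and `W` is a
multiplicatively closed subset of `R`, then `S_W` (the localization of `S` at the image of
`W`) is a semicontent `R_W`-algebra. -/
theorem isSemicontentAlgebra_localization (R S : Type*) [CommRing R] [CommRing S] [Algebra R S]
    (W : Submonoid R)
    (RW SW : Type*) [CommRing RW] [CommRing SW]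
    [Algebra R RW] [IsLocalization W RW]
    [Algebra S SW] [IsLocalization (W.map (algebraMap R S)) SW]
    [Algebra R SW] [IsScalarTower R S SW]
    [Algebra RW SW] [IsScalarTower R RW SW]
    (h : IsSemicontentAlgebra R S) : IsSemicontentAlgebra RW SW := by
  have := h.1
  exact ⟨faithfullyFlat_localization (S := S) W RW SW, h.isOhmRushAlgebra_localization W RW SW,
    fun V _ y hx ↦ h.map_orc_mul_localization_eq W V y hx⟩
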